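/- arXiv:2502.08021 — 2 statements merged into one kernel-verified Lean document; each statement's English description precedes it below -/
import Mathlib

section
/- Change-of-measure bound for OPE error: for any function Q bounded by V_max, |J(π) − E_{d_0}[Q(s,π)]| ≤ (1/(1−γ)) · √(C₁ · E_μ[((T^π Q)(s,a) − Q(s,a))²]), where C₁ = E_{d^π}[d^π(s,a)/μ(s,a)] is the concentrability coefficient. -/
open Finset

/-- Change-of-measure bound for the OPE error: combining the Bellman flow identity with
Cauchy–Schwarz, `|J(π) − E_{d₀}[Q(s,π)]| ≤ (1/(1−γ))·√(C₁·E_μ[((T^πQ)(s,a) − Q(s,a))²])`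
where `C₁ = E_{d^π}[d^π(s,a)/μ(s,a)]` and `μ > 0` wherever `d^π > 0`. -/
theorem stmt12 {S A : Type*} [Fintype S] [Fintype A]
    (P : S → A → S → ℝ) (π : S → A → ℝ) (R : S → A → ℝ) (γ : ℝ)
    (μ : S → A → ℝ) (d0 : S → ℝ) (dpi : S → A → ℝ) (Qpi Q : S → A → ℝ)
    (hγ1 : γ < 1)
    (hQpi : ∀ s a, Qpi s a =
      R s a + γ * ∑ s', P s a s' * ∑ a', π s' a' * Qpi s' a')
    (hflow : ∀ s a, dpi s a = π s a *
      ((1 - γ) * d0 s + γ * ∑ sb, ∑ ab, dpi sb ab * P sb ab s))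
    (hdpi : ∀ s a, 0 ≤ dpi s a) (hμ : ∀ s a, 0 ≤ μ s a)
    (hcov : ∀ s a, dpi s a ≠ 0 → 0 < μ s a) :
    |(∑ s, d0 s * ∑ a, π s a * Qpi s a) - (∑ s, d0 s * ∑ a, π s a * Q s a)| ≤
      (1 / (1 - γ)) * Real.sqrt
        ((∑ s, ∑ a, dpi s a * (dpi s a / μ s a)) *
          ∑ s, ∑ a, μ s a *
            ((R s a + γ * ∑ s', P s a s' * ∑ a', π s' a' * Q s' a') - Q s a) ^ 2) := by
  classical
  have h1γ : (0:ℝ) < 1 - γ := by linarith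
  set f : S → A → ℝ :=
    fun s a => (R s a + γ * ∑ s', P s a s' * ∑ a', π s' a' * Q s' a') - Q s a with hf_def
  set VD : S → ℝ := fun s => ∑ a, π s a * (Qpi s a - Q s a) with hVD_def
  set W : S → ℝ := fun s => ∑ sb, ∑ ab, dpi sb ab * P sb ab s with hW_def
  -- VD splits
  have hVDsplit : ∀ s, VD s = (∑ a, π s a * Qpi s a) - ∑ a, π s a * Q s a := by
    intro s
    rw [hVD_def, ← Finset.sum_sub_distrib]
    exact Finset.sum_congr rfl fun a _ => by ring
  -- rewrite f via Bellman equation for Qpi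
  have hfeq : ∀ s a, f s a = (Qpi s a - Q s a) - γ * ∑ s', P s a s' * VD s' := by
    intro s a
    have h1 : ∑ s', P s a s' * VD s' =
        (∑ s', P s a s' * ∑ a', π s' a' * Qpi s' a') -
          ∑ s', P s a s' * ∑ a', π s' a' * Q s' a' := by
      rw [← Finset.sum_sub_distrib]
      refine Finset.sum_congr rfl fun s' _ => ?_
      rw [hVDsplit s']; ring
    simp only [hf_def]
    rw [h1, hQpi s a]; ring
  -- key flow identity
  have key : ∑ s, ∑ a, dpi s a * f s a = (1 - γ) * ∑ s, d0 s * VD s := by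
    have t1 : ∀ s, ∑ a, dpi s a * (Qpi s a - Q s a) =
        ((1 - γ) * d0 s + γ * W s) * VD s := by
      intro s
      rw [hVD_def, Finset.mul_sum]
      refine Finset.sum_congr rfl fun a _ => ?_
      rw [hflow s a]; simp only [hW_def]; ring
    have t2 : ∑ s, ∑ a, dpi s a * ∑ s', P s a s' * VD s' =
        ∑ s', W s' * VD s' := by
      have e1 : ∀ s a, dpi s a * ∑ s', P s a s' * VD s' =
          ∑ s', dpi s a * P s a s' * VD s' := by
        intro s a; rw [Finset.mul_sum]
        exact Finset.sum_congr rfl fun s' _ => by ring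
      simp only [e1]
      rw [Finset.sum_congr rfl fun s (_ : s ∈ Finset.univ) =>
        (Finset.sum_comm (f := fun a s' => dpi s a * P s a s' * VD s')), Finset.sum_comm]
      refine Finset.sum_congr rfl fun s' _ => ?_
      simp only [← Finset.sum_mul, hW_def]
    have step1 : ∑ s, ∑ a, dpi s a * f s a =
        (∑ s, ((1 - γ) * d0 s + γ * W s) * VD s) - γ * ∑ s', W s' * VD s' := by
      calc ∑ s, ∑ a, dpi s a * f s a
          = ∑ s, ∑ a, (dpi s a * (Qpi s a - Q s a) -
              γ * (dpi s a * ∑ s', P s a s' * VD s')) :=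
            Finset.sum_congr rfl fun s _ => Finset.sum_congr rfl fun a _ => by
              rw [hfeq s a]; ring
        _ = (∑ s, ∑ a, dpi s a * (Qpi s a - Q s a)) -
              γ * ∑ s, ∑ a, dpi s a * ∑ s', P s a s' * VD s' := by
            rw [Finset.mul_sum, ← Finset.sum_sub_distrib]
            refine Finset.sum_congr rfl fun s _ => ?_
            rw [Finset.mul_sum, ← Finset.sum_sub_distrib]
        _ = (∑ s, ((1 - γ) * d0 s + γ * W s) * VD s) - γ * ∑ s', W s' * VD s' := by
            rw [t2, Finset.sum_congr rfl fun s _ => t1 s]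
    rw [step1]
    rw [Finset.sum_congr rfl (fun s _ => by ring :
      ∀ s ∈ Finset.univ, ((1 - γ) * d0 s + γ * W s) * VD s =
        (1 - γ) * (d0 s * VD s) + γ * (W s * VD s))]
    rw [Finset.sum_add_distrib, ← Finset.mul_sum, ← Finset.mul_sum]
    ring
  -- the error equals (1/(1-γ)) * ∑ dpi f
  have hsumVD : ∑ s, d0 s * VD s =
      (∑ s, d0 s * ∑ a, π s a * Qpi s a) - ∑ s, d0 s * ∑ a, π s a * Q s a := by
    rw [← Finset.sum_sub_distrib]
    exact Finset.sum_congr rfl fun s _ => by rw [hVDsplit s]; ring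
  have hAB : (∑ s, d0 s * ∑ a, π s a * Qpi s a) - (∑ s, d0 s * ∑ a, π s a * Q s a) =
      (1 / (1 - γ)) * ∑ s, ∑ a, dpi s a * f s a := by
    rw [key, hsumVD]; field_simp
  -- Cauchy–Schwarz
  set u : S × A → ℝ := fun p => dpi p.1 p.2 / Real.sqrt (μ p.1 p.2) with hu_def
  set v : S × A → ℝ := fun p => Real.sqrt (μ p.1 p.2) * f p.1 p.2 with hv_def
  have huv : ∀ p : S × A, dpi p.1 p.2 * f p.1 p.2 = u p * v p := by
    intro p
    by_cases h : dpi p.1 p.2 = 0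
    · simp [hu_def, hv_def, h]
    · have hμp := hcov _ _ h
      have hs : Real.sqrt (μ p.1 p.2) ≠ 0 := by positivity
      simp only [hu_def, hv_def]
      field_simp
  have hu2 : ∀ p : S × A, u p ^ 2 = dpi p.1 p.2 * (dpi p.1 p.2 / μ p.1 p.2) := by
    intro p
    by_cases h : dpi p.1 p.2 = 0
    · simp [hu_def, h]
    · have hμp := hcov _ _ h
      simp only [hu_def, div_pow, Real.sq_sqrt hμp.le]
      rw [sq, mul_div_assoc]
  have hv2 : ∀ p : S × A, v p ^ 2 = μ p.1 p.2 * f p.1 p.2 ^ 2 := by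
    intro p
    simp only [hv_def, mul_pow, Real.sq_sqrt (hμ p.1 p.2)]
  have hcs : (∑ p : S × A, u p * v p) ^ 2 ≤
      (∑ p : S × A, u p ^ 2) * ∑ p : S × A, v p ^ 2 :=
    Finset.sum_mul_sq_le_sq_mul_sq Finset.univ u v
  have habs : |∑ p : S × A, u p * v p| ≤
      Real.sqrt ((∑ p : S × A, u p ^ 2) * ∑ p : S × A, v p ^ 2) := by
    rw [← Real.sqrt_sq_eq_abs]
    exact Real.sqrt_le_sqrt hcs
  -- convert product sums to iterated sums
  have hprod1 : ∑ p : S × A, u p * v p = ∑ s, ∑ a, dpi s a * f s a := by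
    rw [Fintype.sum_prod_type]
    exact Finset.sum_congr rfl fun s _ => Finset.sum_congr rfl fun a _ => (huv (s, a)).symm
  have hprod2 : ∑ p : S × A, u p ^ 2 = ∑ s, ∑ a, dpi s a * (dpi s a / μ s a) := by
    rw [Fintype.sum_prod_type]
    exact Finset.sum_congr rfl fun s _ => Finset.sum_congr rfl fun a _ => hu2 (s, a)
  have hprod3 : ∑ p : S × A, v p ^ 2 = ∑ s, ∑ a, μ s a * f s a ^ 2 := by
    rw [Fintype.sum_prod_type]
    exact Finset.sum_congr rfl fun s _ => Finset.sum_congr rfl fun a _ => hv2 (s, a)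
  have hE : (∑ s, ∑ a, μ s a *
      ((R s a + γ * ∑ s', P s a s' * ∑ a', π s' a' * Q s' a') - Q s a) ^ 2) =
      ∑ s, ∑ a, μ s a * f s a ^ 2 := rfl
  rw [hAB, hE, abs_mul, abs_of_pos (by positivity : (0:ℝ) < 1 / (1 - γ))]
  refine mul_le_mul_of_nonneg_left ?_ (by positivity)
  rw [← hprod1, ← hprod2, ← hprod3]
  exact habs
end

section
/- Sign-flip upper bound on the absolute Bellman error: for any Q bounded by V_max and any finite class G containing T^π Q, E_μ[|Q(s,a) − (T^π Q)(s,a)|] ≤ max_{g∈G} E_μ[sgn(Q(s,a) − g(s,a)) · (Q(s,a) − r − γQ(s',π))], where the expectation on the right is over (s,a)~μ, r=R(s,a), s'~P(·|s,a). -/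
open Finset

/-- `sgn x = 1` if `x ≥ 0`, `−1` otherwise. -/
noncomputable def sgn (x : ℝ) : ℝ := if 0 ≤ x then 1 else -1

/-- Sign-flip upper bound on the absolute Bellman error: for `Q` bounded by `V_max` and a
finite class `G = {g_k}` containing `T^π Q`,
`E_μ[|Q − T^πQ|] ≤ max_{g ∈ G} E_μ[sgn(Q − g)·(Q(s,a) − r − γQ(s',π))]`. -/
theorem stmt13 {S A : Type*} [Fintype S] [Fintype A] {m : ℕ}
    (μ : S → A → ℝ) (P : S → A → S → ℝ) (π : S → A → ℝ)
    (R : S → A → ℝ) (γ Vmax : ℝ) (Q : S → A → ℝ)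
    (G : Fin m → S → A → ℝ) (j0 : Fin m)
    (hμ : ∀ s a, 0 ≤ μ s a) (hP1 : ∀ s a, ∑ s', P s a s' = 1)
    (hQb : ∀ s a, |Q s a| ≤ Vmax)
    (hj0 : ∀ s a, G j0 s a =
      R s a + γ * ∑ s', P s a s' * ∑ a', π s' a' * Q s' a') :
    (∑ s, ∑ a, μ s a *
        |Q s a - (R s a + γ * ∑ s', P s a s' * ∑ a', π s' a' * Q s' a')|) ≤
      Finset.univ.sup' ⟨j0, Finset.mem_univ j0⟩ (fun k =>
        ∑ s, ∑ a, μ s a * (sgn (Q s a - G k s a) *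
          (Q s a - R s a - γ * ∑ s', P s a s' * ∑ a', π s' a' * Q s' a'))) := by
  refine le_trans (le_of_eq ?_) (Finset.le_sup' _ (Finset.mem_univ j0))
  refine Finset.sum_congr rfl fun s _ => Finset.sum_congr rfl fun a _ => ?_
  congr 1
  rw [hj0 s a]
  set x := Q s a - (R s a + γ * ∑ s', P s a s' * ∑ a', π s' a' * Q s' a') with hx
  have : Q s a - R s a - γ * ∑ s', P s a s' * ∑ a', π s' a' * Q s' a' = x := by
    rw [hx]; ring
  rw [this, sgn]
  split_ifs with h
  · rw [abs_of_nonneg h]; ring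
  · rw [abs_of_neg (not_le.mp h)]; ring
end
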